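/- Let r > 0, ω₁ ≠ ω₂ and φ₁, φ₂ ∈ ℝ, and set F(t) = r·e^{i(φ₁−ω₁t)} + r·e^{i(φ₂−ω₂t)} and a(t) = |F(t)|. Then a(t) = 2r·|cos(((ω₂−ω₁)t + φ₁ − φ₂)/2)|, and at every t where F(t) ≠ 0 the Chu–Mei quotient satisfies a''(t)/a(t) = −((ω₁−ω₂)/2)². In particular, at any singular point t̂ (where F(t̂) = 0), the limit of the Chu–Mei quotient as t → t̂ equals −((ω₁−ω₂)/2)², which is finite: for a bichromatic wave the Chu–Mei quotient is bounded at singular points. -/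

import Mathlib

/-!
Writing both phases about their mean gives `F t = 2r cos θ(t) · e^{iψ(t)}` with `θ` affine in `t`
of slope `(ω₂ - ω₁)/2`, so `a = |2r cos θ|`. Near a point where `cos θ ≠ 0` the absolute value is
locally `±2r cos θ`, whose quotient `a''/a` is `-θ'²`. The zeros of `cos θ` are simple because
`θ' ≠ 0`, hence isolated, so near a singular point the quotient is constant off the point itself.
-/

open Real Filter Topology

theorem Complex.exp_mul_I_add_exp_mul_I (x y : ℝ) :
    Complex.exp (x * Complex.I) + Complex.exp (y * Complex.I) =
      ((2 * Real.cos ((x - y) / 2) : ℝ) : ℂ) * Complex.exp (((x + y) / 2 : ℝ) * Complex.I) := by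
  push_cast [Complex.ofReal_cos]
  rw [Complex.two_cos, add_mul, ← Complex.exp_add, ← Complex.exp_add]
  congr 2 <;> ring

theorem Complex.norm_exp_mul_I_add_exp_mul_I (x y : ℝ) :
    ‖Complex.exp (x * Complex.I) + Complex.exp (y * Complex.I)‖ = 2 * |Real.cos ((x - y) / 2)| := by
  rw [Complex.exp_mul_I_add_exp_mul_I, norm_mul, Complex.norm_exp_ofReal_mul_I, Complex.norm_real,
    Real.norm_eq_abs, mul_one, abs_mul, abs_two]

noncomputable def chuMeiQuotient (f : ℝ → ℝ) (t : ℝ) : ℝ := deriv (deriv f) t / f t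

theorem chuMeiQuotient_abs {f : ℝ → ℝ} {t : ℝ} (hf : ContinuousAt f t) (ht : f t ≠ 0) :
    chuMeiQuotient (fun s => |f s|) t = chuMeiQuotient f t := by
  unfold chuMeiQuotient
  dsimp only
  rcases ht.lt_or_gt with hneg | hpos
  · have hloc : (fun s => |f s|) =ᶠ[𝓝 t] -f := by
      filter_upwards [hf.eventually_lt continuousAt_const hneg] with s hs using abs_of_neg hs
    have hderiv : deriv (deriv (-f)) t = -deriv (deriv f) t := by
      rw [deriv.neg', ← deriv.neg]
      rfl
    rw [hloc.deriv.deriv_eq, hderiv, abs_of_neg hneg, neg_div_neg_eq]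
  · have hloc : (fun s => |f s|) =ᶠ[𝓝 t] f := by
      filter_upwards [continuousAt_const.eventually_lt hf hpos] with s hs using abs_of_pos hs
    rw [hloc.deriv.deriv_eq, abs_of_pos hpos]

theorem deriv_deriv_const_mul_cos_mul_add (K c d t : ℝ) :
    deriv (deriv fun s => K * Real.cos (c * s + d)) t = -c ^ 2 * (K * Real.cos (c * t + d)) := by
  have hphase (s : ℝ) : HasDerivAt (fun s => c * s + d) c s := by
    simpa using ((hasDerivAt_id s).const_mul c).add_const d
  have hderiv :
      deriv (fun s => K * Real.cos (c * s + d)) = fun s => -(K * c) * Real.sin (c * s + d) := by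
    funext s
    rw [((hphase s).cos.const_mul K).deriv]
    ring
  rw [hderiv, ((hphase t).sin.const_mul (-(K * c))).deriv]
  ring

theorem chuMeiQuotient_const_mul_cos_mul_add {K c d t : ℝ} (ht : K * Real.cos (c * t + d) ≠ 0) :
    chuMeiQuotient (fun s => K * Real.cos (c * s + d)) t = -c ^ 2 := by
  rw [chuMeiQuotient, deriv_deriv_const_mul_cos_mul_add, mul_div_cancel_right₀ _ ht]

theorem eventually_cos_mul_add_ne_zero {c : ℝ} (hc : c ≠ 0) (d t₀ : ℝ) :
    ∀ᶠ t in 𝓝[≠] t₀, Real.cos (c * t + d) ≠ 0 := by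
  by_cases h₀ : Real.cos (c * t₀ + d) = 0
  · have hderiv : HasDerivAt (fun t => Real.cos (c * t + d)) (-Real.sin (c * t₀ + d) * c) t₀ := by
      simpa using (((hasDerivAt_id t₀).const_mul c).add_const d).cos
    have hsin : Real.sin (c * t₀ + d) ≠ 0 := by
      intro hs
      simpa [h₀, hs] using Real.sin_sq_add_cos_sq (c * t₀ + d)
    simpa [h₀] using hderiv.eventually_ne (by simp [hsin, hc])
  · have hcont : Continuous fun t => Real.cos (c * t + d) := by fun_prop
    exact nhdsWithin_le_nhds (hcont.continuousAt.eventually_ne h₀)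

theorem bichromatic_chu_mei_bounded
    (r ω₁ ω₂ φ₁ φ₂ : ℝ) (hr : 0 < r) (hω : ω₁ ≠ ω₂)
    (F : ℝ → ℂ)
    (hF : F = fun t : ℝ => (r : ℂ) * Complex.exp (Complex.I * ((φ₁ : ℂ) - (ω₁ : ℂ) * (t : ℂ))) +
                       (r : ℂ) * Complex.exp (Complex.I * ((φ₂ : ℂ) - (ω₂ : ℂ) * (t : ℂ))))
    (a : ℝ → ℝ) (ha : a = fun t => ‖F t‖) :
    (∀ t, a t = 2 * r * |Real.cos (((ω₂ - ω₁) * t + φ₁ - φ₂) / 2)|) ∧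
    (∀ t, F t ≠ 0 → deriv (deriv a) t / a t = -((ω₁ - ω₂) / 2) ^ 2) ∧
    (∀ t₀, F t₀ = 0 →
      Tendsto (fun t => deriv (deriv a) t / a t) (𝓝[≠] t₀)
        (𝓝 (-((ω₁ - ω₂) / 2) ^ 2))) := by
  set c := (ω₂ - ω₁) / 2
  set d := (φ₁ - φ₂) / 2
  have hc : c ≠ 0 := div_ne_zero (sub_ne_zero.mpr hω.symm) two_ne_zero
  have hphase (t : ℝ) : ((ω₂ - ω₁) * t + φ₁ - φ₂) / 2 = c * t + d := by ring
  have hamp (t : ℝ) : a t = 2 * r * |Real.cos (c * t + d)| := by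
    have hsum := Complex.norm_exp_mul_I_add_exp_mul_I (φ₁ - ω₁ * t) (φ₂ - ω₂ * t)
    push_cast at hsum
    rw [ha, hF]
    dsimp only
    rw [← mul_add, norm_mul, Complex.norm_real, Real.norm_of_nonneg hr.le,
      mul_comm Complex.I, mul_comm Complex.I, hsum, ← hphase]
    ring_nf
  have ha_abs : a = fun t => |2 * r * Real.cos (c * t + d)| := by
    funext t
    rw [hamp, abs_mul, abs_of_pos (by positivity : 0 < 2 * r)]
  have hF_eq_zero (t : ℝ) : F t = 0 ↔ Real.cos (c * t + d) = 0 := by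
    rw [← norm_eq_zero, show ‖F t‖ = a t by rw [ha], hamp]
    simp [hr.ne']
  have hquot (t : ℝ) (ht : Real.cos (c * t + d) ≠ 0) :
      chuMeiQuotient a t = -((ω₁ - ω₂) / 2) ^ 2 := by
    have hne : 2 * r * Real.cos (c * t + d) ≠ 0 := by positivity
    rw [ha_abs, chuMeiQuotient_abs (f := fun s => 2 * r * Real.cos (c * s + d)) (by fun_prop) hne,
      chuMeiQuotient_const_mul_cos_mul_add hne]
    ring
  refine ⟨fun t => by rw [hamp, hphase], fun t ht => hquot t ((hF_eq_zero t).not.mp ht),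
    fun t₀ _ => ?_⟩
  exact tendsto_const_nhds.congr'
    ((eventually_cos_mul_add_ne_zero hc d t₀).mono fun t ht => (hquot t ht).symm)
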